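/- arXiv:2002.01384 — 2 statements merged into one kernel-verified Lean document; each statement's English description precedes it below -/
import Mathlib

section
/- Fix $n \geq c_\ell \geq \cdots \geq c_1 \geq 1$ and nonnegative integers $T_\ell,\ldots,T_1$, and let $\mu$ be a partition with $n$ distinct parts. Then $\sum_{\Lambda \text{ bad}} \sum_{\sigma \in S_n} \mathrm{sgn}(\sigma)\, x_{\sigma(1)}^{\lambda_1}\cdots x_{\sigma(n)}^{\lambda_n} = 0$, where the outer sum is over all bad $\mathbf{T}$-extensions $\Lambda$ of $\mu$ (with largest composition $\lambda$). That is, the contributions of bad $\mathbf{T}$-extensions to the alternating sum cancel. -/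
open Finset MvPolynomial

/-- `IsTExt n ℓ μ c T Λ` : `Λ` is a `T`-extension of `μ`, i.e. `Λ 0 = μ` and, for
each step `h` (0-indexed; `Λ h.castSucc = λ^h`, `Λ h.succ = λ^{h+1}` in the paper's
1-indexed notation), we have componentwise containment `λ^{h} ⊆ λ^{h+1}`, total
increase `T h`, and equality in coordinates `k` with `k > c_h` (1-indexed), i.e.
0-indexed coordinates `i` with `c h ≤ i`. -/
def IsTExt (n ℓ : ℕ) (μ : Fin n → ℕ) (c T : Fin ℓ → ℕ)
    (Λ : Fin (ℓ + 1) → Fin n → ℕ) : Prop :=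
  Λ 0 = μ ∧
  ∀ h : Fin ℓ,
    (∀ i, Λ h.castSucc i ≤ Λ h.succ i) ∧
    ((∑ i, Λ h.succ i) = (∑ i, Λ h.castSucc i) + T h) ∧
    (∀ i : Fin n, c h ≤ (i : ℕ) → Λ h.succ i = Λ h.castSucc i)

/-- A `T`-extension is bad if for some `h` there is `2 ≤ k ≤ c_h` (1-indexed) with
`λ^{h+1}_k ≥ λ^{h}_{k-1}`; 0-indexed: adjacent `j, k : Fin n` with `j+1 = k`,
`k+1 ≤ c h`, and `Λ h.succ k ≥ Λ h.castSucc j`. -/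
def IsBadTExt (n ℓ : ℕ) (μ : Fin n → ℕ) (c T : Fin ℓ → ℕ)
    (Λ : Fin (ℓ + 1) → Fin n → ℕ) : Prop :=
  IsTExt n ℓ μ c T Λ ∧
  ∃ h : Fin ℓ, ∃ j k : Fin n, (j : ℕ) + 1 = (k : ℕ) ∧ (k : ℕ) + 1 ≤ c h ∧
    Λ h.castSucc j ≤ Λ h.succ k

/-!
For a bad extension take its first violation: the earliest violated step `h` and, within it, the
rightmost violated column `k`. Swapping columns `k - 1` and `k` in `λ^{h+1}, …, λ^ℓ` gives again a
bad `T`-extension. Containment at step `h` survives because the row `λ^h` is strictly decreasing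
(no earlier step is violated and `μ` is strictly decreasing); a later step `h'` freezes only
columns beyond `c_{h'} ≥ c_h`, which the swap does not touch; and the swap changes no violation at
an earlier step or in a column right of `k`, so the first violation stays the same and the map is
an involution. It transposes two exponents of `λ = λ^ℓ`, so it negates the alternant, and the bad terms cancel in pairs.
-/

open OrderDual (toDual ofDual)

noncomputable def alternant (n : ℕ) (e : Fin n → ℕ) : MvPolynomial (Fin n) ℤ :=
  ∑ σ : Equiv.Perm (Fin n), C (Equiv.Perm.sign σ : ℤ) * ∏ i, X (σ i) ^ e i

theorem alternant_comp_perm {n : ℕ} (e : Fin n → ℕ) (τ : Equiv.Perm (Fin n)) :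
    alternant n (e ∘ τ) = C (Equiv.Perm.sign τ : ℤ) * alternant n e := by
  unfold alternant
  rw [← Equiv.sum_comp (Equiv.mulRight τ), Finset.mul_sum]
  refine Finset.sum_congr rfl fun σ _ => ?_
  have hprod : ∏ i, X ((σ * τ) i) ^ (e ∘ τ) i = ∏ i, (X (σ i) ^ e i : MvPolynomial (Fin n) ℤ) :=
    Equiv.prod_comp τ fun i => X (σ i) ^ e i
  rw [Equiv.coe_mulRight, hprod, Equiv.Perm.sign_mul, Units.val_mul, map_mul]
  ring

def predCol {n : ℕ} (k : Fin n) : Fin n := ⟨k - 1, (Nat.sub_le _ _).trans_lt k.isLt⟩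

theorem val_predCol {n : ℕ} (k : Fin n) : (predCol k : ℕ) = k - 1 := rfl

theorem apply_last_eq_add_sum {ℓ : ℕ} (u : Fin (ℓ + 1) → ℕ) (t : Fin ℓ → ℕ)
    (hu : ∀ h, u h.succ = u h.castSucc + t h) : u (Fin.last ℓ) = u 0 + ∑ h, t h := by
  induction ℓ with
  | zero => simp
  | succ ℓ ih =>
    have := ih (u ∘ Fin.castSucc) (t ∘ Fin.castSucc) fun h => hu h.castSucc
    simp only [Function.comp_apply, Fin.castSucc_zero] at this
    rw [Fin.sum_univ_castSucc, ← add_assoc, ← this, ← Fin.succ_last, hu]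

def IsStep {n : ℕ} (c t : ℕ) (a b : Fin n → ℕ) : Prop :=
  (∀ i, a i ≤ b i) ∧ ((∑ i, b i) = (∑ i, a i) + t) ∧ (∀ i : Fin n, c ≤ (i : ℕ) → b i = a i)

theorem swap_apply_of_lt_of_le {n c : ℕ} {j k i : Fin n} (hj : (j : ℕ) < c) (hk : (k : ℕ) < c)
    (hi : c ≤ (i : ℕ)) : Equiv.swap j k i = i :=
  Equiv.swap_apply_of_ne_of_ne (Fin.ne_of_val_ne (by omega)) (Fin.ne_of_val_ne (by omega))

namespace IsStep

variable {n c t : ℕ} {a b : Fin n → ℕ} {j k : Fin n}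

theorem comp_swap (hs : IsStep c t a b) (hj : (j : ℕ) < c) (hk : (k : ℕ) < c) :
    IsStep c t (a ∘ Equiv.swap j k) (b ∘ Equiv.swap j k) := by
  refine ⟨fun i => hs.1 _, ?_, fun i hi => ?_⟩
  · simpa only [Function.comp_apply, Equiv.sum_comp] using hs.2.1
  · simp only [Function.comp_apply, swap_apply_of_lt_of_le hj hk hi]
    exact hs.2.2 i hi

theorem comp_swap_right (hs : IsStep c t a b) (hj : (j : ℕ) < c) (hk : (k : ℕ) < c)
    (hjk : a j ≤ b k) (hkj : a k ≤ b j) : IsStep c t a (b ∘ Equiv.swap j k) := by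
  refine ⟨fun i => ?_, ?_, fun i hi => ?_⟩
  · rcases eq_or_ne i j with rfl | hij
    · simpa using hjk
    rcases eq_or_ne i k with rfl | hik
    · simpa using hkj
    simpa [Equiv.swap_apply_of_ne_of_ne hij hik] using hs.1 i
  · simpa only [Function.comp_apply, Equiv.sum_comp] using hs.2.1
  · simp only [Function.comp_apply, swap_apply_of_lt_of_le hj hk hi]
    exact hs.2.2 i hi

end IsStep

def IsViolation {n ℓ : ℕ} (c : Fin ℓ → ℕ) (Λ : Fin (ℓ + 1) → Fin n → ℕ) (h : Fin ℓ) (k : Fin n) :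
    Prop :=
  0 < (k : ℕ) ∧ (k : ℕ) + 1 ≤ c h ∧ Λ h.castSucc (predCol k) ≤ Λ h.succ k

open Classical in
/-- Columns are ordered downwards, so the least violation lies at the earliest violated step and,
within it, in the rightmost violated column. -/
noncomputable def violations {n ℓ : ℕ} (c : Fin ℓ → ℕ) (Λ : Fin (ℓ + 1) → Fin n → ℕ) :
    Finset (Fin ℓ ×ₗ (Fin n)ᵒᵈ) :=
  univ.filter fun p => IsViolation c Λ (ofLex p).1 (ofDual (ofLex p).2)

def IsFirstViolation {n ℓ : ℕ} (c : Fin ℓ → ℕ) (Λ : Fin (ℓ + 1) → Fin n → ℕ) (m : Fin ℓ)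
    (k : Fin n) : Prop :=
  IsLeast (violations c Λ : Set (Fin ℓ ×ₗ (Fin n)ᵒᵈ)) (toLex (m, toDual k))

def swapAbove {n ℓ : ℕ} (m : Fin ℓ) (j k : Fin n) (Λ : Fin (ℓ + 1) → Fin n → ℕ) :
    Fin (ℓ + 1) → Fin n → ℕ :=
  fun g => if m.castSucc < g then Λ g ∘ Equiv.swap j k else Λ g

open Classical in
noncomputable def swapAtFirstViolation {n ℓ : ℕ} (c : Fin ℓ → ℕ) (Λ : Fin (ℓ + 1) → Fin n → ℕ) :
    Fin (ℓ + 1) → Fin n → ℕ :=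
  if h : (violations c Λ).Nonempty then
    let p := ofLex ((violations c Λ).min' h)
    swapAbove p.1 (predCol (ofDual p.2)) (ofDual p.2) Λ
  else Λ

theorem IsLeast.of_forall_le_mem_iff {α : Type*} [LinearOrder α] {s t : Set α} {a : α}
    (ha : IsLeast s a) (h : ∀ b ≤ a, b ∈ t ↔ b ∈ s) : IsLeast t a :=
  ⟨(h a le_rfl).2 ha.1, fun b hb => le_of_not_gt fun hba => (ha.2 ((h b hba.le).1 hb)).not_gt hba⟩

section TExtension

variable {n ℓ : ℕ} {μ : Fin n → ℕ} {c T : Fin ℓ → ℕ} {Λ : Fin (ℓ + 1) → Fin n → ℕ}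
  {m : Fin ℓ} {j k : Fin n}

theorem mem_violations {h : Fin ℓ} :
    toLex (h, toDual k) ∈ violations c Λ ↔ IsViolation c Λ h k := by
  simp [violations]

theorem swapAbove_of_le {g : Fin (ℓ + 1)} (hg : g ≤ m.castSucc) : swapAbove m j k Λ g = Λ g :=
  if_neg hg.not_gt

theorem swapAbove_of_lt {g : Fin (ℓ + 1)} (hg : m.castSucc < g) :
    swapAbove m j k Λ g = Λ g ∘ Equiv.swap j k :=
  if_pos hg

theorem swapAbove_swapAbove : swapAbove m j k (swapAbove m j k Λ) = Λ := by
  funext g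
  by_cases hg : m.castSucc < g
  · ext i
    simp [swapAbove_of_lt hg]
  · rw [swapAbove_of_le (not_lt.1 hg), swapAbove_of_le (not_lt.1 hg)]

theorem IsTExt.step (hΛ : IsTExt n ℓ μ c T Λ) (h : Fin ℓ) :
    IsStep (c h) (T h) (Λ h.castSucc) (Λ h.succ) :=
  hΛ.2 h

theorem IsTExt.monotone (hΛ : IsTExt n ℓ μ c T Λ) (i : Fin n) : Monotone fun g => Λ g i :=
  Fin.monotone_iff_le_succ.2 fun h => (hΛ.step h).1 i

theorem IsTExt.apply_le_add_sum (hΛ : IsTExt n ℓ μ c T Λ) (g : Fin (ℓ + 1)) (i : Fin n) :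
    Λ g i ≤ μ i + ∑ h, T h := by
  have hμ : ∀ x, μ x ≤ Λ (Fin.last ℓ) x := fun x => hΛ.1 ▸ hΛ.monotone x (Fin.zero_le _)
  have hsum : ∑ x, Λ (Fin.last ℓ) x = ∑ x, μ x + ∑ h, T h := by
    rw [apply_last_eq_add_sum (fun g => ∑ x, Λ g x) T fun h => (hΛ.step h).2.1, hΛ.1]
  have hi : Λ (Fin.last ℓ) i - μ i ≤ ∑ x, (Λ (Fin.last ℓ) x - μ x) :=
    single_le_sum (f := fun x => Λ (Fin.last ℓ) x - μ x) (fun _ _ => Nat.zero_le _) (mem_univ i)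
  rw [sum_tsub_distrib _ fun x _ => hμ x, hsum, add_tsub_cancel_left] at hi
  have : Λ g i ≤ Λ (Fin.last ℓ) i := hΛ.monotone i (Fin.le_last g)
  omega

theorem IsTExt.apply_lt_apply_predCol (hμ : StrictAnti μ) (hΛ : IsTExt n ℓ μ c T Λ)
    (g : Fin (ℓ + 1)) (hg : ∀ h : Fin ℓ, h.castSucc < g → ∀ k, ¬IsViolation c Λ h k)
    (hk : 0 < (k : ℕ)) : Λ g k < Λ g (predCol k) := by
  induction g using Fin.induction with
  | zero =>
    rw [hΛ.1]
    exact hμ (Fin.lt_def.2 (by rw [val_predCol]; omega))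
  | succ h ih =>
    have hrow := ih fun h' hh' => hg h' (hh'.trans Fin.castSucc_lt_succ)
    by_cases hc : (k : ℕ) + 1 ≤ c h
    · have hlt : Λ h.succ k < Λ h.castSucc (predCol k) :=
        not_le.1 fun hle => hg h Fin.castSucc_lt_succ k ⟨hk, hc, hle⟩
      exact hlt.trans_le ((hΛ.step h).1 _)
    · rw [(hΛ.step h).2.2 k (by omega)]
      exact hrow.trans_le ((hΛ.step h).1 _)

theorem isTExt_swapAbove (hc : Monotone c) (hΛ : IsTExt n ℓ μ c T Λ) (hv : IsViolation c Λ m k)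
    (hdec : Λ m.castSucc k < Λ m.castSucc (predCol k)) :
    IsTExt n ℓ μ c T (swapAbove m (predCol k) k Λ) := by
  obtain ⟨hk, hkc, hle⟩ := hv
  have hj : (predCol k : ℕ) < c m := by rw [val_predCol]; omega
  refine ⟨by rw [swapAbove_of_le (Fin.zero_le _)]; exact hΛ.1, fun h => ?_⟩
  rcases lt_trichotomy h m with hlt | rfl | hgt
  · rw [swapAbove_of_le (Fin.castSucc_le_castSucc_iff.2 hlt.le),
      swapAbove_of_le (Fin.succ_le_castSucc_iff.2 hlt)]
    exact hΛ.step h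
  · rw [swapAbove_of_le le_rfl, swapAbove_of_lt Fin.castSucc_lt_succ]
    exact (hΛ.step h).comp_swap_right hj (by omega) hle (hdec.le.trans ((hΛ.step h).1 _))
  · have hcm := hc hgt.le
    rw [swapAbove_of_lt (Fin.castSucc_lt_castSucc_iff.2 hgt),
      swapAbove_of_lt ((Fin.castSucc_lt_castSucc_iff.2 hgt).trans Fin.castSucc_lt_succ)]
    exact (hΛ.step h).comp_swap (by omega) (by omega)

theorem mem_violations_swapAbove_iff (hstep : Λ m.castSucc (predCol k) ≤ Λ m.succ (predCol k))
    (hv : IsViolation c Λ m k) {q : Fin ℓ ×ₗ (Fin n)ᵒᵈ} (hq : q ≤ toLex (m, toDual k)) :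
    q ∈ violations c (swapAbove m (predCol k) k Λ) ↔ q ∈ violations c Λ := by
  obtain ⟨h, k', rfl⟩ : ∃ h k', q = toLex (h, toDual k') := ⟨_, _, rfl⟩
  rw [Prod.Lex.toLex_le_toLex] at hq
  dsimp only at hq
  rw [OrderDual.toDual_le_toDual] at hq
  simp only [mem_violations, IsViolation]
  rcases hq with hlt | ⟨rfl, hkk⟩
  · rw [swapAbove_of_le (Fin.castSucc_le_castSucc_iff.2 hlt.le),
      swapAbove_of_le (Fin.succ_le_castSucc_iff.2 hlt)]
  rw [swapAbove_of_le le_rfl, swapAbove_of_lt Fin.castSucc_lt_succ, Function.comp_apply]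
  rcases hkk.eq_or_lt with rfl | hlt
  · rw [Equiv.swap_apply_right]
    exact iff_of_true ⟨hv.1, hv.2.1, hstep⟩ hv
  · rw [Equiv.swap_apply_of_ne_of_ne (Fin.ne_of_val_ne (by rw [val_predCol]; omega)) hlt.ne']

theorem swapAtFirstViolation_eq (hp : IsFirstViolation c Λ m k) :
    swapAtFirstViolation c Λ = swapAbove m (predCol k) k Λ := by
  have hne : (violations c Λ).Nonempty := ⟨_, hp.1⟩
  have hmin : (violations c Λ).min' hne = toLex (m, toDual k) :=
    ((violations c Λ).isLeast_min' hne).unique hp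
  rw [swapAtFirstViolation, dif_pos hne, hmin]
  rfl

theorem isFirstViolation_swapAbove (hΛ : IsTExt n ℓ μ c T Λ) (hp : IsFirstViolation c Λ m k) :
    IsFirstViolation c (swapAbove m (predCol k) k Λ) m k :=
  IsLeast.of_forall_le_mem_iff hp fun _ hq =>
    mem_violations_swapAbove_iff ((hΛ.step m).1 _) (mem_violations.1 hp.1) hq

theorem isTExt_swapAbove_of_isFirstViolation (hμ : StrictAnti μ) (hc : Monotone c)
    (hΛ : IsTExt n ℓ μ c T Λ) (hp : IsFirstViolation c Λ m k) :
    IsTExt n ℓ μ c T (swapAbove m (predCol k) k Λ) := by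
  have hv : IsViolation c Λ m k := mem_violations.1 hp.1
  refine isTExt_swapAbove hc hΛ hv (hΛ.apply_lt_apply_predCol hμ _ (fun h hh k' hv' => ?_) hv.1)
  have hlt : toLex (h, toDual k') < toLex (m, toDual k) :=
    Prod.Lex.toLex_lt_toLex.2 (Or.inl (Fin.castSucc_lt_castSucc_iff.1 hh))
  exact (hp.2 (mem_violations.2 hv')).not_gt hlt

theorem isBadTExt_iff :
    IsBadTExt n ℓ μ c T Λ ↔ IsTExt n ℓ μ c T Λ ∧ (violations c Λ).Nonempty := by
  constructor
  · rintro ⟨hΛ, h, j, k, hjk, hkc, hle⟩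
    have hj : predCol k = j := Fin.ext (by rw [val_predCol]; omega)
    exact ⟨hΛ, _, mem_violations.2 ⟨by omega, hkc, hj ▸ hle⟩⟩
  · rintro ⟨hΛ, p, hp⟩
    obtain ⟨h, k, rfl⟩ : ∃ h k, p = toLex (h, toDual k) := ⟨_, _, rfl⟩
    obtain ⟨hk, hkc, hle⟩ := mem_violations.1 hp
    exact ⟨hΛ, h, predCol k, k, by rw [val_predCol]; omega, hkc, hle⟩

theorem IsBadTExt.exists_isFirstViolation (hΛ : IsBadTExt n ℓ μ c T Λ) :
    ∃ (m : Fin ℓ) (k : Fin n), IsFirstViolation c Λ m k :=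
  ⟨_, _, (violations c Λ).isLeast_min' (isBadTExt_iff.1 hΛ).2⟩

theorem isBadTExt_swapAtFirstViolation (hμ : StrictAnti μ) (hc : Monotone c)
    (hΛ : IsBadTExt n ℓ μ c T Λ) : IsBadTExt n ℓ μ c T (swapAtFirstViolation c Λ) := by
  obtain ⟨m, k, hp⟩ := hΛ.exists_isFirstViolation
  rw [swapAtFirstViolation_eq hp]
  exact isBadTExt_iff.2 ⟨isTExt_swapAbove_of_isFirstViolation hμ hc hΛ.1 hp,
    _, (isFirstViolation_swapAbove hΛ.1 hp).1⟩

theorem IsBadTExt.swapAtFirstViolation_swapAtFirstViolation (hΛ : IsBadTExt n ℓ μ c T Λ) :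
    swapAtFirstViolation c (swapAtFirstViolation c Λ) = Λ := by
  obtain ⟨m, k, hp⟩ := hΛ.exists_isFirstViolation
  rw [swapAtFirstViolation_eq hp,
    swapAtFirstViolation_eq (isFirstViolation_swapAbove hΛ.1 hp), swapAbove_swapAbove]

theorem IsBadTExt.alternant_swapAtFirstViolation (hΛ : IsBadTExt n ℓ μ c T Λ) :
    alternant n (swapAtFirstViolation c Λ (Fin.last ℓ)) = -alternant n (Λ (Fin.last ℓ)) := by
  obtain ⟨m, k, hp⟩ := hΛ.exists_isFirstViolation
  have hk : predCol k ≠ k := by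
    have := (mem_violations.1 hp.1).1
    exact Fin.ne_of_val_ne (by rw [val_predCol]; omega)
  rw [swapAtFirstViolation_eq hp, swapAbove_of_lt (Fin.castSucc_lt_last m), alternant_comp_perm,
    Equiv.Perm.sign_swap hk]
  simp

end TExtension

open Classical in
theorem stmt1_general (n ℓ : ℕ) (μ : Fin n → ℕ) (hμ : ∀ i j : Fin n, i < j → μ j < μ i)
    (c T : Fin ℓ → ℕ) (hmono : ∀ h h' : Fin ℓ, h ≤ h' → c h ≤ c h') :
    ∑ Λ ∈ (Fintype.piFinset fun _ : Fin (ℓ + 1) =>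
        Fintype.piFinset fun i : Fin n => Finset.range (μ i + (∑ h, T h) + 1)).filter
        (fun Λ => IsBadTExt n ℓ μ c T Λ),
      ∑ σ : Equiv.Perm (Fin n),
        (C (Equiv.Perm.sign σ : ℤ)) * ∏ i, X (σ i) ^ (Λ (Fin.last ℓ) i)
    = 0 := by
  simp only [← alternant.eq_1]
  refine sum_involution (fun Λ _ => swapAtFirstViolation c Λ) (fun Λ hΛ => ?_)
    (fun Λ hΛ hne hfix => ?_) (fun Λ hΛ => ?_) (fun Λ hΛ => ?_) <;>
    replace hΛ := (mem_filter.1 hΛ).2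
  · rw [hΛ.alternant_swapAtFirstViolation, add_neg_cancel]
  · have := hΛ.alternant_swapAtFirstViolation
    rw [hfix, self_eq_neg] at this
    exact hne this
  · have hΛ' := isBadTExt_swapAtFirstViolation hμ hmono hΛ
    refine mem_filter.2 ⟨?_, hΛ'⟩
    simpa [Fintype.mem_piFinset, Nat.lt_succ_iff] using hΛ'.1.apply_le_add_sum
  · exact hΛ.swapAtFirstViolation_swapAtFirstViolation

open Classical in
/-- the contributions of bad `T`-extensions to the alternating sum cancel. -/
theorem stmt1 (n ℓ : ℕ) (μ : Fin n → ℕ) (hμ : ∀ i j : Fin n, i < j → μ j < μ i)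
    (c T : Fin ℓ → ℕ) (hmono : ∀ h h' : Fin ℓ, h ≤ h' → c h ≤ c h')
    (hc1 : ∀ h, 1 ≤ c h) (hcn : ∀ h, c h ≤ n) :
    ∑ Λ ∈ (Fintype.piFinset fun _ : Fin (ℓ + 1) =>
        Fintype.piFinset fun i : Fin n => Finset.range (μ i + (∑ h, T h) + 1)).filter
        (fun Λ => IsBadTExt n ℓ μ c T Λ),
      ∑ σ : Equiv.Perm (Fin n),
        (C (Equiv.Perm.sign σ : ℤ)) * ∏ i, X (σ i) ^ (Λ (Fin.last ℓ) i)
    = 0 :=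
  stmt1_general n ℓ μ hμ c T hmono
end

section
/- Let $\mu$ be a partition with $n$ parts and conjugate $\mu'=(c_\ell,\ldots,c_1)$. Let $X$ be the set of fillings of the Young diagram of $\mu$ where box $b_{ij}$ contains $|b_{ij}| \geq 1$ copies of $i$, the weight is $\lambda$, and the column weight is $\mathbf{T}$. Let $Y$ be the set of row-weakly-increasing fillings of shape $\lambda/\mu$ of weight $\mathbf{T}$ such that every entry $i$ occurs on or above row $c_i$. Then the map sending $x \in X$ to the filling $y$ where row $i$ of $y$ contains exactly $|b_{ij}(x)| - 1$ copies of $j$ for each $j$ is a bijection from $X$ to $Y$. -/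
open Finset MvPolynomial

/-- Height of the column with label `j` (columns are labeled `ℓ, ℓ-1, …, 1` from
left to right, so the column labeled `j` is the one in 0-indexed position `ℓ - j`):
the number of rows `i` with `μ i > ℓ - j`. -/
def colHt (n : ℕ) (μ : Fin n → ℕ) (ℓ j : ℕ) : ℕ :=
  (Finset.univ.filter fun i : Fin n => ℓ - j < μ i).card

/-- A multiset tableau of shape `μ` (a partition with `n` parts, all parts `≤ ℓ`).
`box i j` is the content of the box in row `i` (0-indexed) and the column
labeled `j` (labels `ℓ, …, 1` from left to right); boxes outside the diagram are
empty.  Entries are positive integers; the maximum of each box is strictly less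
than the minimum of the box below it and weakly less than the minimum of the box
to its right (the box to the right of column label `j+1` is column label `j`). -/
structure MTab (n ℓ : ℕ) (μ : Fin n → ℕ) where
  box : Fin n → ℕ → Multiset ℕ
  pos : ∀ i j, ∀ a ∈ box i j, 1 ≤ a
  supp : ∀ i j, box i j ≠ 0 ↔ (1 ≤ j ∧ j ≤ ℓ ∧ ℓ - j < μ i)
  right : ∀ (i : Fin n) (j : ℕ), ∀ a ∈ box i (j + 1), ∀ z ∈ box i j, a ≤ z
  below : ∀ (i i' : Fin n) (j : ℕ), (i : ℕ) + 1 = (i' : ℕ) →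
    ∀ a ∈ box i j, ∀ z ∈ box i' j, a < z

/-- The weight of a multiset tableau: the number of entries equal to `v`. -/
def MTab.wt {n ℓ : ℕ} {μ : Fin n → ℕ} (P : MTab n ℓ μ) (v : ℕ) : ℕ :=
  ∑ i : Fin n, ∑ j ∈ Finset.Icc 1 ℓ, (P.box i j).count v

/-- The column weight of a multiset tableau at column label `j`: the number of
entries in column `j` minus the height of column `j`. -/
def MTab.cw {n ℓ : ℕ} {μ : Fin n → ℕ} (P : MTab n ℓ μ) (j : ℕ) : ℕ :=
  (∑ i : Fin n, (P.box i j).card) - colHt n μ ℓ j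

/-- The maximality conditions for a multiset tableau: box `b_{ij}` (row `i`,
0-indexed, column label `j`) contains only entries equal to `i + 1` (the paper's
1-indexed row number), and for all adjacent rows `i, i+1` and all `k ≥ 0`,
`∑_{1 ≤ j ≤ k} (|b_{(i+1)j}| - |b_{i(j-1)}|) ≤ 1`. -/
def MTab.IsMax {n ℓ : ℕ} {μ : Fin n → ℕ} (P : MTab n ℓ μ) : Prop :=
  (∀ (i : Fin n) (j : ℕ), ∀ a ∈ P.box i j, a = (i : ℕ) + 1) ∧
  (∀ (i i' : Fin n), (i : ℕ) + 1 = (i' : ℕ) → ∀ k : ℕ,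
    (∑ j ∈ Finset.Icc 1 k, (((P.box i' j).card : ℤ) - ((P.box i (j - 1)).card : ℤ))) ≤ 1)

/-- A row-weakly-increasing filling of the skew shape `λ/μ` (0-indexed columns,
value `0` marking empty cells) with values in `{1, …, ℓ}` such that every entry
`v` occurs on or above row `c_v = colHt n μ ℓ v` (no column condition imposed). -/
structure YTab (n ℓ : ℕ) (μ lam : Fin n → ℕ) where
  entry : Fin n → ℕ → ℕ
  supp : ∀ i j, entry i j ≠ 0 ↔ (μ i ≤ j ∧ j < lam i)
  le_alpha : ∀ i j, entry i j ≤ ℓ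
  row : ∀ (i : Fin n) (j j' : ℕ), j ≤ j' → entry i j ≠ 0 → entry i j' ≠ 0 →
    entry i j ≤ entry i j'
  restrict : ∀ i j, entry i j ≠ 0 → (i : ℕ) < colHt n μ ℓ (entry i j)

/-- The weight of such a filling: the number of entries equal to `v ≥ 1`. -/
def YTab.wt {n ℓ : ℕ} {μ lam : Fin n → ℕ} (y : YTab n ℓ μ lam) (v : ℕ) : ℕ :=
  ∑ i : Fin n, ((Finset.range (lam i)).filter fun j => y.entry i j = v).card

/-!
Since box `b_{ij}` of `x` holds only copies of `i`, the element `x` is nothing but the family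
of box sizes `|b_{ij}| ≥ 1` on the shape `μ`. A weakly increasing row is determined by how often
each letter occurs in it, so row `i` of `y` is forced: from column `μ_i` on it lists `|b_{ij}| - 1`
copies of `j` in increasing order of `j`, and it has length `λ_i` exactly when row `i` of `x`
has weight `λ_i`. Summing the excesses `|b_{ij}| - 1` down a column turns the column weight of `x`
into the weight of `y`, and the condition that `j` occurs in row `i` of `y` only on or above
row `c_j` says precisely that `b_{ij}` lies in the shape `μ`.
-/

namespace RowFill

variable (s : ℕ) (c : ℕ → ℕ)

def fillEnd (j : ℕ) : ℕ := s + ∑ k ∈ Icc 1 j, c k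

@[simp] lemma fillEnd_zero : fillEnd s c 0 = s := by simp [fillEnd]

lemma fillEnd_succ (j : ℕ) : fillEnd s c (j + 1) = fillEnd s c j + c (j + 1) := by
  simp only [fillEnd, sum_Icc_succ_top (Nat.le_add_left 1 j), add_assoc]

lemma fillEnd_monotone : Monotone (fillEnd s c) := fun _ _ h =>
  Nat.add_le_add_left (sum_le_sum_of_subset (Icc_subset_Icc_right h)) _

lemma fillEnd_le_of_forall_lt {ℓ : ℕ} (hc : ∀ j, ℓ < j → c j = 0) (j : ℕ) :
    fillEnd s c j ≤ fillEnd s c ℓ := by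
  induction j with
  | zero => exact fillEnd_monotone s c (Nat.zero_le ℓ)
  | succ j ih =>
    rcases le_or_gt (j + 1) ℓ with h | h
    · exact fillEnd_monotone s c h
    · rwa [fillEnd_succ, hc _ h, add_zero]

open Classical in
/-- The row which, from position `s` on, holds `c 1` copies of `1`, then `c 2` copies of `2`,
and so on; positions outside this range hold `0`. -/
noncomputable def fill (p : ℕ) : ℕ :=
  if h : s ≤ p ∧ ∃ j, p < fillEnd s c j then Nat.find h.2 else 0

variable {s c}

lemma fill_ne_zero_iff {p : ℕ} : fill s c p ≠ 0 ↔ s ≤ p ∧ ∃ j, p < fillEnd s c j := by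
  unfold fill
  split_ifs with h
  · refine iff_of_true (fun h0 => ?_) h
    have := Nat.find_spec h.2
    rw [h0, fillEnd_zero] at this
    omega
  · exact iff_of_false (not_not.2 rfl) h

lemma fill_eq_iff {p j : ℕ} (hj : 0 < j) :
    fill s c p = j ↔ fillEnd s c (j - 1) ≤ p ∧ p < fillEnd s c j := by
  constructor
  · intro h
    have hdef := fill_ne_zero_iff.1 (h ▸ hj.ne' : fill s c p ≠ 0)
    rw [fill, dif_pos hdef, Nat.find_eq_iff] at h
    exact ⟨not_lt.1 (h.2 _ (by omega)), h.1⟩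
  · rintro ⟨h1, h2⟩
    have hs : s ≤ p := by simpa using (fillEnd_monotone s c (Nat.zero_le (j - 1))).trans h1
    have h : s ≤ p ∧ ∃ j, p < fillEnd s c j := ⟨hs, j, h2⟩
    rw [fill, dif_pos h, Nat.find_eq_iff]
    exact ⟨h2, fun m hm => not_lt.2 ((fillEnd_monotone s c (by omega)).trans h1)⟩

lemma fill_le_fill {p q : ℕ} (hpq : p ≤ q) (hp : fill s c p ≠ 0) (hq : fill s c q ≠ 0) :
    fill s c p ≤ fill s c q := by
  have hp' := fill_ne_zero_iff.1 hp
  have hq' := fill_ne_zero_iff.1 hq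
  rw [fill, fill, dif_pos hp', dif_pos hq']
  exact Nat.find_le (hpq.trans_lt (Nat.find_spec hq'.2))

lemma pos_of_fill_ne_zero {p : ℕ} (hp : fill s c p ≠ 0) : 0 < c (fill s c p) := by
  have h := (fill_eq_iff (Nat.pos_of_ne_zero hp)).1 rfl
  obtain ⟨j, hj⟩ : ∃ j, fill s c p = j + 1 := ⟨_, (Nat.succ_pred_eq_of_ne_zero hp).symm⟩
  rw [hj] at h ⊢
  rw [Nat.add_sub_cancel, fillEnd_succ] at h
  omega

lemma fill_ne_zero_iff_of_forall_lt {ℓ : ℕ} (hc : ∀ j, ℓ < j → c j = 0) {p : ℕ} :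
    fill s c p ≠ 0 ↔ s ≤ p ∧ p < fillEnd s c ℓ :=
  fill_ne_zero_iff.trans <| and_congr_right fun _ =>
    ⟨fun ⟨_, hj⟩ => hj.trans_le (fillEnd_le_of_forall_lt s c hc _), fun h => ⟨ℓ, h⟩⟩

lemma card_filter_fill_eq {e : ℕ} (he : ∀ j, fillEnd s c j ≤ e) {j : ℕ} (hj : 0 < j) :
    #{p ∈ range e | fill s c p = j} = c j := by
  have hfib : {p ∈ range e | fill s c p = j} = Ico (fillEnd s c (j - 1)) (fillEnd s c j) := by
    ext p
    simp only [mem_filter, mem_range, mem_Ico, fill_eq_iff hj]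
    exact ⟨And.right, fun h => ⟨h.2.trans_le (he j), h⟩⟩
  obtain ⟨j, rfl⟩ : ∃ k, j = k + 1 := ⟨j - 1, by omega⟩
  rw [hfib, Nat.card_Ico, Nat.add_sub_cancel, fillEnd_succ]
  omega

lemma fillEnd_congr {c' : ℕ → ℕ} (h : ∀ j, 0 < j → c j = c' j) : fillEnd s c = fillEnd s c' :=
  funext fun _ => congrArg (s + ·) (sum_congr rfl fun k hk => h k (mem_Icc.1 hk).1)

lemma fill_congr {c' : ℕ → ℕ} (h : ∀ j, 0 < j → c j = c' j) : fill s c = fill s c' := by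
  have hend := fillEnd_congr (s := s) h
  funext p
  by_cases hp : fill s c p = 0
  · rw [hp, eq_comm, ← not_ne_iff, fill_ne_zero_iff, ← hend, ← fill_ne_zero_iff, not_not, hp]
  · have hpos := Nat.pos_of_ne_zero hp
    have h := (fill_eq_iff (c := c) hpos).1 rfl
    rw [hend] at h
    exact ((fill_eq_iff hpos).2 h).symm

lemma fillEnd_card_fiber (f : ℕ → ℕ) (e j : ℕ) :
    fillEnd s (fun k => #{p ∈ range e | f p = k}) j = s + #{p ∈ range e | f p ∈ Icc 1 j} := by
  rw [fillEnd, sum_card_fiberwise_eq_card_filter]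

lemma fill_card_fiber {f : ℕ → ℕ} {e : ℕ} (hsupp : ∀ p, f p ≠ 0 ↔ s ≤ p ∧ p < e)
    (hmono : ∀ p q, p ≤ q → f p ≠ 0 → f q ≠ 0 → f p ≤ f q) :
    fill s (fun k => #{p ∈ range e | f p = k}) = f := by
  funext p
  by_cases hp : f p = 0
  · rw [hp, ← not_ne_iff, fill_ne_zero_iff]
    rintro ⟨hsp, j, hj⟩
    have hsub : {q ∈ range e | f q ∈ Icc 1 j} ⊆ Ico s e := fun q hq => by
      simp only [mem_filter, mem_range, mem_Icc, mem_Ico] at hq ⊢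
      exact (hsupp q).1 (by omega)
    have hcard := card_le_card hsub
    rw [Nat.card_Ico] at hcard
    rw [fillEnd_card_fiber] at hj
    exact (hsupp p).2 ⟨hsp, by omega⟩ hp
  · obtain ⟨hsp, hpe⟩ := (hsupp p).1 hp
    rw [fill_eq_iff (Nat.pos_of_ne_zero hp), fillEnd_card_fiber, fillEnd_card_fiber]
    have hbefore : {q ∈ range e | f q ∈ Icc 1 (f p - 1)} ⊆ Ico s p := fun q hq => by
      simp only [mem_filter, mem_range, mem_Icc, mem_Ico] at hq ⊢
      refine ⟨((hsupp q).1 (by omega)).1, not_le.1 fun hpq => ?_⟩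
      have := hmono p q hpq hp (by omega)
      omega
    have hupto : Icc s p ⊆ {q ∈ range e | f q ∈ Icc 1 (f p)} := fun q hq => by
      simp only [mem_filter, mem_range, mem_Icc] at hq ⊢
      have hq0 : f q ≠ 0 := (hsupp q).2 ⟨hq.1, by omega⟩
      exact ⟨by omega, Nat.pos_of_ne_zero hq0, hmono q p hq.2 hq0 hp⟩
    have h1 := card_le_card hbefore
    have h2 := card_le_card hupto
    rw [Nat.card_Ico] at h1
    rw [Nat.card_Icc] at h2
    omega

end RowFill

open RowFill

lemma Finset.sum_tsub_one_add_card_filter_ne_zero {ι : Type*} (s : Finset ι) (c : ι → ℕ) :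
    ∑ a ∈ s, (c a - 1) + #{a ∈ s | c a ≠ 0} = ∑ a ∈ s, c a := by
  rw [card_filter, ← sum_add_distrib]
  exact sum_congr rfl fun a _ => by split_ifs <;> omega

lemma Fin.lt_card_filter_iff {n : ℕ} {P : Fin n → Prop} [DecidablePred P]
    (hP : ∀ i j, i ≤ j → P j → P i) (i : Fin n) : (i : ℕ) < #{j | P j} ↔ P i := by
  constructor
  · intro h
    by_contra hi
    have hsub : ({j | P j} : Finset (Fin n)) ⊆ Iio i := fun j hj => by
      simp only [mem_filter, mem_univ, true_and, mem_Iio] at hj ⊢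
      exact lt_of_not_ge fun hij => hi (hP i j hij hj)
    have := card_le_card hsub
    rw [Fin.card_Iio] at this
    omega
  · intro hi
    have hsub : Iic i ⊆ ({j | P j} : Finset (Fin n)) := fun j hj => by
      simp only [mem_filter, mem_univ, true_and]
      exact hP j i (mem_Iic.1 hj) hi
    have := card_le_card hsub
    rw [Fin.card_Iic] at this
    omega

section Tableaux

variable {n ℓ : ℕ} {μ lam : Fin n → ℕ}

lemma lt_colHt_iff (hμ : Antitone μ) (i : Fin n) (j : ℕ) :
    (i : ℕ) < colHt n μ ℓ j ↔ ℓ - j < μ i :=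
  Fin.lt_card_filter_iff (fun _ _ hij h => h.trans_le (hμ hij)) i

namespace MTab

lemma ext_box {x x' : MTab n ℓ μ} (h : x.box = x'.box) : x = x' := by
  cases x; cases x'; cases h; rfl

def excess (x : MTab n ℓ μ) (i : Fin n) (j : ℕ) : ℕ := (x.box i j).card - 1

variable (x : MTab n ℓ μ)

lemma card_box_ne_zero_iff {i : Fin n} {j : ℕ} :
    (x.box i j).card ≠ 0 ↔ 1 ≤ j ∧ j ≤ ℓ ∧ ℓ - j < μ i :=
  Multiset.card_eq_zero.not.trans (x.supp i j)

lemma excess_eq_zero_of_lt {i : Fin n} {j : ℕ} (hj : ℓ < j) : x.excess i j = 0 := by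
  have hbox : (x.box i j).card = 0 := not_not.1 fun h => by
    have := x.card_box_ne_zero_iff.1 h
    omega
  simp [excess, hbox]

lemma mem_shape_of_excess_pos {i : Fin n} {j : ℕ} (h : 0 < x.excess i j) :
    1 ≤ j ∧ j ≤ ℓ ∧ ℓ - j < μ i :=
  x.card_box_ne_zero_iff.1 (by unfold excess at h; omega)

lemma sum_card_row {i : Fin n} (hμℓ : μ i ≤ ℓ) :
    ∑ j ∈ Icc 1 ℓ, (x.box i j).card = fillEnd (μ i) (x.excess i) ℓ := by
  have hrow : {j ∈ Icc 1 ℓ | (x.box i j).card ≠ 0} = Ioc (ℓ - μ i) ℓ := by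
    ext j
    simp only [mem_filter, mem_Icc, mem_Ioc, x.card_box_ne_zero_iff]
    omega
  rw [← sum_tsub_one_add_card_filter_ne_zero, hrow, Nat.card_Ioc]
  simp only [fillEnd, excess]
  omega

lemma cw_eq_sum_excess {j : ℕ} (hj : 1 ≤ j) (hjℓ : j ≤ ℓ) :
    x.cw j = ∑ i, x.excess i j := by
  have hcol : univ.filter (fun i => (x.box i j).card ≠ 0) = univ.filter (ℓ - j < μ ·) :=
    filter_congr fun i _ => by rw [x.card_box_ne_zero_iff]; omega
  rw [cw, ← sum_tsub_one_add_card_filter_ne_zero, hcol, colHt, Nat.add_sub_cancel]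
  rfl

lemma wt_succ_eq_sum_card (hrow : ∀ (i : Fin n) (j : ℕ), ∀ a ∈ x.box i j, a = (i : ℕ) + 1)
    (i : Fin n) : x.wt ((i : ℕ) + 1) = ∑ j ∈ Icc 1 ℓ, (x.box i j).card := by
  rw [wt, sum_eq_single i]
  · exact sum_congr rfl fun j _ =>
      Multiset.count_eq_card.2 fun a ha => (hrow i j a ha).symm
  · refine fun i' _ hi' => sum_eq_zero fun j _ => Multiset.count_eq_zero.2 fun ha => hi' ?_
    exact Fin.ext (by have := hrow i' j _ ha; omega)
  · exact fun h => absurd (mem_univ i) h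

lemma fillEnd_excess_eq_of_wt (hμℓ : ∀ i, μ i ≤ ℓ)
    (hrow : ∀ (i : Fin n) (j : ℕ), ∀ a ∈ x.box i j, a = (i : ℕ) + 1)
    (hwt : ∀ i : Fin n, x.wt ((i : ℕ) + 1) = lam i) (i : Fin n) :
    fillEnd (μ i) (x.excess i) ℓ = lam i := by
  rw [← x.sum_card_row (hμℓ i), ← x.wt_succ_eq_sum_card hrow, hwt]

noncomputable def toSkew (hμ : Antitone μ) (hend : ∀ i, fillEnd (μ i) (x.excess i) ℓ = lam i) :
    YTab n ℓ μ lam where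
  entry i := fill (μ i) (x.excess i)
  supp i p := by
    rw [fill_ne_zero_iff_of_forall_lt fun _ => x.excess_eq_zero_of_lt, hend]
  le_alpha i p := by
    by_cases hp : fill (μ i) (x.excess i) p = 0
    · exact hp ▸ Nat.zero_le ℓ
    · exact (x.mem_shape_of_excess_pos (pos_of_fill_ne_zero hp)).2.1
  row i _ _ := fill_le_fill
  restrict i p hp :=
    (lt_colHt_iff hμ i _).2 (x.mem_shape_of_excess_pos (pos_of_fill_ne_zero hp)).2.2

variable {x} (hμ : Antitone μ) (hend : ∀ i, fillEnd (μ i) (x.excess i) ℓ = lam i)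

lemma card_filter_toSkew_entry (i : Fin n) {j : ℕ} (hj : 0 < j) :
    #{p ∈ range (lam i) | (x.toSkew hμ hend).entry i p = j} = x.excess i j :=
  card_filter_fill_eq (fun _ => hend i ▸ fillEnd_le_of_forall_lt _ _
    (fun _ => x.excess_eq_zero_of_lt) _) hj

lemma toSkew_wt {v : ℕ} (hv : 1 ≤ v) (hvℓ : v ≤ ℓ) : (x.toSkew hμ hend).wt v = x.cw v := by
  rw [x.cw_eq_sum_excess hv hvℓ]
  exact sum_congr rfl fun i _ => card_filter_toSkew_entry hμ hend i hv

end MTab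

namespace YTab

lemma ext_entry {y y' : YTab n ℓ μ lam} (h : y.entry = y'.entry) : y = y' := by
  cases y; cases y'; cases h; rfl

variable (y : YTab n ℓ μ lam)

def rowCount (i : Fin n) (j : ℕ) : ℕ := #{p ∈ range (lam i) | y.entry i p = j}

lemma rowCount_eq_zero (hμ : Antitone μ) {i : Fin n} {j : ℕ} (hj : 0 < j)
    (h : ¬(j ≤ ℓ ∧ ℓ - j < μ i)) : y.rowCount i j = 0 := by
  refine card_eq_zero.2 (filter_eq_empty_iff.2 fun p _ hp => h ?_)
  have hne : y.entry i p ≠ 0 := by omega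
  exact hp ▸ ⟨y.le_alpha i p, (lt_colHt_iff hμ i _).1 (y.restrict i p hne)⟩

def toMTab : MTab n ℓ μ where
  box i j := Multiset.replicate
    (if 1 ≤ j ∧ j ≤ ℓ ∧ ℓ - j < μ i then 1 + y.rowCount i j else 0) ((i : ℕ) + 1)
  pos i j a ha := by
    rw [Multiset.eq_of_mem_replicate ha]
    omega
  supp i j := by
    split_ifs with h
    · exact iff_of_true (Multiset.card_pos.1 (by simp)) h
    · simpa using h
  right i j a ha z hz := by
    rw [Multiset.eq_of_mem_replicate ha, Multiset.eq_of_mem_replicate hz]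
  below i i' j hii' a ha z hz := by
    rw [Multiset.eq_of_mem_replicate ha, Multiset.eq_of_mem_replicate hz]
    omega

lemma eq_of_mem_toMTab_box (i : Fin n) (j : ℕ) : ∀ a ∈ y.toMTab.box i j, a = (i : ℕ) + 1 :=
  fun _ ha => Multiset.eq_of_mem_replicate ha

lemma excess_toMTab (hμ : Antitone μ) (i : Fin n) {j : ℕ} (hj : 0 < j) :
    y.toMTab.excess i j = y.rowCount i j := by
  simp only [MTab.excess, toMTab, Multiset.card_replicate]
  split_ifs with h
  · omega
  · exact (y.rowCount_eq_zero hμ hj (by omega)).symm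

lemma fillEnd_excess_toMTab (hμ : Antitone μ) (hsub : ∀ i, μ i ≤ lam i) (i : Fin n) :
    fillEnd (μ i) (y.toMTab.excess i) ℓ = lam i := by
  have hrow : {p ∈ range (lam i) | y.entry i p ∈ Icc 1 ℓ} = Ico (μ i) (lam i) := by
    ext p
    have := y.supp i p
    have := y.le_alpha i p
    simp only [mem_filter, mem_range, mem_Icc, mem_Ico]
    omega
  rw [fillEnd_congr fun _ => y.excess_toMTab hμ i]
  unfold rowCount
  rw [fillEnd_card_fiber, hrow, Nat.card_Ico]
  have := hsub i
  omega

lemma fill_excess_toMTab (hμ : Antitone μ) (i : Fin n) :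
    fill (μ i) (y.toMTab.excess i) = y.entry i := by
  rw [fill_congr fun _ => y.excess_toMTab hμ i]
  exact fill_card_fiber (y.supp i) (y.row i)

lemma toMTab_wt (hμ : Antitone μ) (hμℓ : ∀ i, μ i ≤ ℓ) (hsub : ∀ i, μ i ≤ lam i) (i : Fin n) :
    y.toMTab.wt ((i : ℕ) + 1) = lam i := by
  rw [y.toMTab.wt_succ_eq_sum_card y.eq_of_mem_toMTab_box, y.toMTab.sum_card_row (hμℓ i),
    y.fillEnd_excess_toMTab hμ hsub]

lemma toMTab_cw (hμ : Antitone μ) {j : ℕ} (hj : 1 ≤ j) (hjℓ : j ≤ ℓ) :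
    y.toMTab.cw j = y.wt j := by
  rw [y.toMTab.cw_eq_sum_excess hj hjℓ]
  exact sum_congr rfl fun i _ => y.excess_toMTab hμ i hj

end YTab

lemma MTab.toMTab_toSkew {x : MTab n ℓ μ} (hμ : Antitone μ)
    (hend : ∀ i, fillEnd (μ i) (x.excess i) ℓ = lam i)
    (hrow : ∀ (i : Fin n) (j : ℕ), ∀ a ∈ x.box i j, a = (i : ℕ) + 1) :
    (x.toSkew hμ hend).toMTab = x := by
  refine ext_box (funext₂ fun i j => ?_)
  simp only [YTab.toMTab]
  split_ifs with h
  · have hpos : (x.box i j).card ≠ 0 := x.card_box_ne_zero_iff.2 h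
    rw [YTab.rowCount, card_filter_toSkew_entry hμ hend i h.1, excess,
      show 1 + ((x.box i j).card - 1) = (x.box i j).card by omega]
    exact (Multiset.eq_replicate_card.2 (hrow i j)).symm
  · rw [Multiset.replicate_zero, eq_comm, ← Multiset.card_eq_zero]
    exact not_not.1 (mt x.card_box_ne_zero_iff.1 h)

lemma YTab.toSkew_toMTab {y : YTab n ℓ μ lam} (hμ : Antitone μ)
    (hend : ∀ i, fillEnd (μ i) (y.toMTab.excess i) ℓ = lam i) :
    y.toMTab.toSkew hμ hend = y :=
  ext_entry (funext fun i => y.fill_excess_toMTab hμ i)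

end Tableaux

theorem stmt8_general (n ℓ : ℕ) (hn : 0 < n) (μ lam : Fin n → ℕ)
    (hμ : ∀ i j : Fin n, i ≤ j → μ j ≤ μ i) (hl : ℓ = μ ⟨0, hn⟩)
    (hsub : ∀ i, μ i ≤ lam i)
    (T : ℕ → ℕ) :
    ∃ e : {x : MTab n ℓ μ // (∀ (i : Fin n) (j : ℕ), ∀ a ∈ x.box i j, a = (i : ℕ) + 1) ∧
            (∀ i : Fin n, x.wt ((i : ℕ) + 1) = lam i) ∧
            (∀ j, 1 ≤ j → j ≤ ℓ → x.cw j = T j)} ≃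
          {y : YTab n ℓ μ lam // ∀ v, 1 ≤ v → v ≤ ℓ → y.wt v = T v},
      ∀ x (i : Fin n) (j : ℕ), 1 ≤ j →
        ((Finset.range (lam i)).filter fun jj => (e x).1.entry i jj = j).card
          = (x.1.box i j).card - 1 := by
  have hμℓ (i : Fin n) : μ i ≤ ℓ := hl ▸ hμ ⟨0, hn⟩ i (Nat.zero_le _)
  have hend (x : MTab n ℓ μ) (hrow : ∀ (i : Fin n) (j : ℕ), ∀ a ∈ x.box i j, a = (i : ℕ) + 1)
      (hwt : ∀ i : Fin n, x.wt ((i : ℕ) + 1) = lam i) := x.fillEnd_excess_eq_of_wt hμℓ hrow hwt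
  refine ⟨{
    toFun := fun x => ⟨x.1.toSkew hμ (hend x.1 x.2.1 x.2.2.1), fun v hv hvℓ =>
      (MTab.toSkew_wt hμ _ hv hvℓ).trans (x.2.2.2 v hv hvℓ)⟩
    invFun := fun y => ⟨y.1.toMTab, y.1.eq_of_mem_toMTab_box, y.1.toMTab_wt hμ hμℓ hsub,
      fun j hj hjℓ => (y.1.toMTab_cw hμ hj hjℓ).trans (y.2 j hj hjℓ)⟩
    left_inv := fun x => Subtype.ext (MTab.toMTab_toSkew hμ (hend x.1 x.2.1 x.2.2.1) x.2.1)
    right_inv := fun y => Subtype.ext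
      (YTab.toSkew_toMTab hμ (y.1.fillEnd_excess_toMTab hμ hsub)) },
    fun x i j hj => MTab.card_filter_toSkew_entry hμ (hend x.1 x.2.1 x.2.2.1) i hj⟩

/-- the map sending `x` (a filling of shape `μ` where box `b_{ij}`
contains `|b_{ij}| ≥ 1` copies of the row value `i+1`, of weight `λ` and column
weight `T`) to the filling `y` of shape `λ/μ` whose row `i` contains exactly
`|b_{ij}(x)| - 1` copies of `j` for each column label `j`, is a bijection from
`X` to `Y`. -/
theorem stmt8 (n ℓ : ℕ) (hn : 0 < n) (μ lam : Fin n → ℕ)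
    (hμ : ∀ i j : Fin n, i ≤ j → μ j ≤ μ i) (hl : ℓ = μ ⟨0, hn⟩)
    (hlam : ∀ i j : Fin n, i ≤ j → lam j ≤ lam i) (hsub : ∀ i, μ i ≤ lam i)
    (T : ℕ → ℕ) :
    ∃ e : {x : MTab n ℓ μ // (∀ (i : Fin n) (j : ℕ), ∀ a ∈ x.box i j, a = (i : ℕ) + 1) ∧
            (∀ i : Fin n, x.wt ((i : ℕ) + 1) = lam i) ∧
            (∀ j, 1 ≤ j → j ≤ ℓ → x.cw j = T j)} ≃
          {y : YTab n ℓ μ lam // ∀ v, 1 ≤ v → v ≤ ℓ → y.wt v = T v},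
      ∀ x (i : Fin n) (j : ℕ), 1 ≤ j →
        ((Finset.range (lam i)).filter fun jj => (e x).1.entry i jj = j).card
          = (x.1.box i j).card - 1 :=
  stmt8_general n ℓ hn μ lam hμ hl hsub T
end
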